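/- Let G be a finite simple graph with maximum degree Δ, let c be a Grundy coloring of G, and let i be a color with i < Δ. Then in every connected component of the subgraph of G induced by the vertices colored i or Δ, the number of i-colored vertices exceeds the number of Δ-colored vertices by at most 1. -/

import Mathlib

set_option linter.unusedSectionVars false

open scoped ENNReal

attribute [local instance] Classical.propDecidable

noncomputable section

namespace DGC

/-! ### Markov chains and expected hitting times -/

/-- `survive K A t s` is the probability that the Markov chain with transition kernel `K`,
started at `s`, has not visited the set `A` within its first `t` steps
(time `0` counts: if `s ∈ A` the chain has hit `A` at time `0`). -/
def survive {S : Type*} (K : S → PMF S) (A : Set S) : ℕ → S → ℝ≥0∞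
  | 0, s => if s ∈ A then 0 else 1
  | (t + 1), s => if s ∈ A then 0 else ∑' s', K s s' * survive K A t s'

/-- The expected hitting time of the set `A` for the Markov chain with kernel `K`
started at `s`; it equals `∑_{t ≥ 0} Pr[T > t]` where `T = min {t : X_t ∈ A}`, and it is `∞`
if `A` is reached with probability less than one. -/
def expectedHitting {S : Type*} (K : S → PMF S) (A : Set S) (s : S) : ℝ≥0∞ :=
  ∑' t, survive K A t s

/-- `log⁺ T = max {1, ln T}`. -/
def logPlus (T : ℕ) : ℝ := max 1 (Real.log T)

variable {V : Type*} [Fintype V] [DecidableEq V]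

/-! ### Colorings, conflicts -/

/-- A coloring (a map `V → ℕ`, colors being `1,2,3,…`) is proper if no edge is monochromatic. -/
def IsProper (G : SimpleGraph V) (c : V → ℕ) : Prop :=
  ∀ u v, G.Adj u v → c u ≠ c v

/-- The set of conflicting edges of the coloring `c`. -/
def conflictSet (G : SimpleGraph V) (c : V → ℕ) : Set (Sym2 V) :=
  {e | e ∈ G.edgeSet ∧ ∃ u v, e = s(u, v) ∧ c u = c v}

/-- The number of conflicting edges of the coloring `c`. -/
def numConflicts (G : SimpleGraph V) (c : V → ℕ) : ℕ :=
  (conflictSet G c).ncard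

/-- The set of proper 2-colorings (with color set `{1,2}`). -/
def properTwoColorings (G : SimpleGraph V) : Set (V → ℕ) :=
  {c | IsProper G c ∧ ∀ v, c v = 1 ∨ c v = 2}

/-- Vertices that are an endpoint of some conflicting edge. -/
def conflictVerts (G : SimpleGraph V) (c : V → ℕ) : Finset V :=
  Finset.univ.filter fun v => ∃ u, G.Adj v u ∧ c v = c u

/-! ### RLS and the (1+1) EA with `k = 2` colors (palette `{1,2}`) -/

/-- Recolor vertex `v` with the unique other color of the palette `{1,2}`. -/
def flip (c : V → ℕ) (v : V) : V → ℕ := Function.update c v (3 - c v)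

/-- One iteration of RLS with `k = 2` colors: choose a vertex `v` uniformly at random,
recolor it with the other color, and accept iff the number of conflicting edges
does not increase. -/
def rls2 (G : SimpleGraph V) (c : V → ℕ) : PMF (V → ℕ) :=
  if h : Nonempty V then
    (@PMF.uniformOfFintype V _ h).map fun v =>
      if numConflicts G (flip c v) ≤ numConflicts G c then flip c v else c
  else PMF.pure c

/-- Bernoulli distribution with an `ℝ≥0∞` parameter (the old `PMF.bernoulli`). -/
def bernoulliENN (p : ℝ≥0∞) (h : p ≤ 1) : PMF Bool :=
  PMF.ofFintype (fun b => cond b p (1 - p)) (by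
    rw [Fintype.sum_bool]; simp only [cond_true, cond_false]; exact add_tsub_cancel_of_le h)

/-- Independent Bernoulli choices along a list of vertices. -/
def flipsAux (p : V → ℝ≥0∞) (h : ∀ v, p v ≤ 1) : List V → PMF (V → Bool)
  | [] => PMF.pure fun _ => false
  | v :: vs =>
      (bernoulliENN (p v) (h v)).bind fun b =>
        (flipsAux p h vs).map fun g => Function.update g v b

/-- A random subset of the vertices (as an indicator function), where each vertex `v` is
included independently with probability `p v`. -/
def flips (p : V → ℝ≥0∞) (h : ∀ v, p v ≤ 1) : PMF (V → Bool) :=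
  flipsAux p h Finset.univ.toList

/-- `1/|V|` (or `0` for the empty graph). -/
def invCard (V : Type*) [Fintype V] : ℝ≥0∞ :=
  if 0 < Fintype.card V then (Fintype.card V : ℝ≥0∞)⁻¹ else 0

lemma invCard_le_one : invCard V ≤ 1 := by
  unfold invCard
  split
  · rw [ENNReal.inv_le_one]
    exact_mod_cast ‹0 < Fintype.card V›
  · exact zero_le_one

lemma half_le_one : (1 / 2 : ℝ≥0∞) ≤ 1 := by
  rw [ENNReal.div_le_iff (by norm_num) (by norm_num)]
  norm_num

/-- Recolor (within the palette `{1,2}`) exactly the vertices selected by `bs`. -/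
def mutate2 (c : V → ℕ) (bs : V → Bool) : V → ℕ := fun v => if bs v then 3 - c v else c v

/-- One iteration of the (1+1) EA with `k = 2` colors: every vertex is independently
recolored with probability `1/n`, and the offspring is accepted iff its number of
conflicting edges is not larger. -/
def ea2 (G : SimpleGraph V) (c : V → ℕ) : PMF (V → ℕ) :=
  (flips (fun _ => invCard V) (fun _ => invCard_le_one)).map fun bs =>
    if numConflicts G (mutate2 c bs) ≤ numConflicts G c then mutate2 c bs else c

/-- One iteration of the tailored (1+1) EA with `k = 2` colors: every endpoint of a
conflicting edge is independently recolored with probability `1/2`, every other vertex with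
probability `1/n`; the offspring is accepted iff its number of conflicting edges is
not larger. -/
def tailoredEA2 (G : SimpleGraph V) (c : V → ℕ) : PMF (V → ℕ) :=
  (flips (fun v => if v ∈ conflictVerts G c then 1 / 2 else invCard V)
      (fun v => by (try dsimp only); split; exacts [half_le_one, invCard_le_one])).map fun bs =>
    if numConflicts G (mutate2 c bs) ≤ numConflicts G c then mutate2 c bs else c

/-- One iteration of the tailored RLS with `k = 2` colors: with probability `1/2` a vertex is
chosen uniformly at random among the endpoints of conflicting edges (if any exist), otherwise
uniformly at random among all vertices; it is recolored with the other color, and the move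
is accepted iff the number of conflicting edges does not increase. -/
def tailoredRls2 (G : SimpleGraph V) (c : V → ℕ) : PMF (V → ℕ) :=
  if hV : Nonempty V then
    (bernoulliENN (1 / 2) half_le_one).bind fun coin =>
      (if h : coin = true ∧ (conflictVerts G c).Nonempty
        then PMF.uniformOfFinset (conflictVerts G c) h.2
        else @PMF.uniformOfFintype V _ hV).map fun v =>
        if numConflicts G (flip c v) ≤ numConflicts G c then flip c v else c
  else PMF.pure c

/-! ### Grundy colorings and Grundy local search -/

/-- The smallest color (from `{1,2,3,…}`) not used by any neighbor of `v`. -/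
def smallestFree (G : SimpleGraph V) (c : V → ℕ) (v : V) : ℕ :=
  sInf {i | 1 ≤ i ∧ ∀ u, G.Adj v u → c u ≠ i}

/-- A coloring is a Grundy coloring iff every vertex has the smallest color not used by any
of its neighbors (equivalently: it is proper, and every vertex `v` has, for every color
`i < c v`, an `i`-colored neighbor). -/
def IsGrundy (G : SimpleGraph V) (c : V → ℕ) : Prop :=
  ∀ v, c v = smallestFree G c v

/-- One step of Grundy local search: some vertex whose color is not the smallest color absent
from its neighborhood is recolored with the smallest color not used by any of its neighbors. -/
def glsStep (G : SimpleGraph V) (c c' : V → ℕ) : Prop :=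
  ∃ v, c v ≠ smallestFree G c v ∧ c' = Function.update c v (smallestFree G c v)

/-- `glsRun G c c'` holds iff `c'` is a possible outcome of a (maximal) run of Grundy local
search started at `c`: it is reachable from `c` by Grundy local search steps and is a
Grundy coloring. -/
def glsRun (G : SimpleGraph V) (c c' : V → ℕ) : Prop :=
  Relation.ReflTransGen (glsStep G) c c' ∧ IsGrundy G c'

/-- The Grundy number of `G`: the largest color used by any Grundy coloring of `G`. -/
def grundyNumber (G : SimpleGraph V) : ℕ :=
  sSup {k | ∃ c v, IsGrundy G c ∧ c v = k}

/-! ### Kempe chains, color eliminations, and iterated local search -/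

/-- The restriction of `G` to the vertex set `S` (an induced subgraph on the same
vertex type). -/
def restrict (G : SimpleGraph V) (S : Set V) : SimpleGraph V where
  Adj u w := G.Adj u w ∧ u ∈ S ∧ w ∈ S
  symm := by constructor; intro u w h; exact ⟨h.1.symm, h.2.2, h.2.1⟩
  loopless := by constructor; intro u h; exact G.ne_of_adj h.1 rfl

/-- `H_j(v)`: the connected component containing `v` of the subgraph of `G` induced by the
vertices colored `c v` or `j`. -/
def kempeSet (G : SimpleGraph V) (c : V → ℕ) (v : V) (j : ℕ) : Set V :=
  {u | (restrict G {w | c w = c v ∨ c w = j}).Reachable v u}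

/-- The Kempe chain operation `(v, j)`: swap the colors `c v` and `j` on all vertices of
`H_j(v)`. -/
def kempeSwap (G : SimpleGraph V) (c : V → ℕ) (v : V) (j : ℕ) : V → ℕ := fun u =>
  if u ∈ kempeSet G c v j then
    if c u = c v then j else if c u = j then c v else c u
  else c u

/-- The union `H_j(v₁) ∪ … ∪ H_j(v_ℓ)` over all `i`-colored neighbors `v₁, …, v_ℓ` of `v`. -/
def ceSet (G : SimpleGraph V) (c : V → ℕ) (v : V) (i j : ℕ) : Set V :=
  {u | ∃ w, G.Adj v w ∧ c w = i ∧ (restrict G {x | c x = i ∨ c x = j}).Reachable w u}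

/-- The color elimination at `v` with colors `i, j`: swap colors `i` and `j` on
`H_j(v₁) ∪ … ∪ H_j(v_ℓ)`, where `v₁, …, v_ℓ` are the `i`-colored neighbors of `v`. -/
def ceSwap (G : SimpleGraph V) (c : V → ℕ) (v : V) (i j : ℕ) : V → ℕ := fun u =>
  if u ∈ ceSet G c v i j then
    if c u = i then j else if c u = j then i else c u
  else c u

/-- `n_i(c)`: the number of `i`-colored vertices of the coloring `c`. -/
def colorCount (c : V → ℕ) (i : ℕ) : ℕ := (Finset.univ.filter fun v => c v = i).card

/-- The selection order `x ⪰ y`: `x` has fewer conflicting edges than `y`, or equally many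
and the color frequencies satisfy `n_i(x) = n_i(y)` for all `i`, or `n_i(x) < n_i(y)` for the
largest index `i` with `n_i(x) ≠ n_i(y)`. -/
def Pref (G : SimpleGraph V) (x y : V → ℕ) : Prop :=
  numConflicts G x < numConflicts G y ∨
    (numConflicts G x = numConflicts G y ∧
      ((∀ i, colorCount x i = colorCount y i) ∨
        ∃ i, colorCount x i < colorCount y i ∧ ∀ k, i < k → colorCount x k = colorCount y k))

/-- One iteration of ILS with Kempe chains, where `gls` is the (arbitrary, but fixed) rule
producing the outcome of a run of Grundy local search: choose `v` uniformly at random and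
`j ∈ {1, …, deg(v) + 1}` uniformly at random, apply the Kempe chain operation `(v, j)`,
apply Grundy local search, and accept the result `z` iff `z ⪰ x`. -/
def ilsKempe (G : SimpleGraph V) (gls : (V → ℕ) → (V → ℕ)) (x : V → ℕ) :
    PMF (V → ℕ) :=
  if hV : Nonempty V then
    (@PMF.uniformOfFintype V _ hV).bind fun v =>
      (PMF.uniformOfFinset (Finset.Icc 1 (G.degree v + 1))
          ⟨1, by simp only [Finset.mem_Icc]; omega⟩).map fun j =>
        let z := gls (kempeSwap G x v j)
        if Pref G z x then z else x
  else PMF.pure x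

/-- The pairs of distinct colors `i ≠ j` with `i, j ∈ {1, …, c v − 1}`. -/
def cePairs (x : V → ℕ) (v : V) : Finset (ℕ × ℕ) :=
  ((Finset.Icc 1 (x v - 1)) ×ˢ (Finset.Icc 1 (x v - 1))).filter fun p => p.1 ≠ p.2

lemma cePairs_nonempty {x : V → ℕ} {v : V} (h : 3 ≤ x v) : (cePairs x v).Nonempty :=
  ⟨(1, 2), by simp only [cePairs, Finset.mem_filter, Finset.mem_product, Finset.mem_Icc]; omega⟩

/-- One iteration of ILS with color eliminations, where `gls` is the (arbitrary, but fixed)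
rule producing the outcome of a run of Grundy local search: choose `v` uniformly at random;
if `c v ≥ 3`, choose distinct `i, j ∈ {1, …, c v − 1}` uniformly at random and apply the
corresponding color elimination; apply Grundy local search, and accept the result `z`
iff `z ⪰ x`. -/
def ilsCE (G : SimpleGraph V) (gls : (V → ℕ) → (V → ℕ)) (x : V → ℕ) :
    PMF (V → ℕ) :=
  if hV : Nonempty V then
    (@PMF.uniformOfFintype V _ hV).bind fun v =>
      if h : 3 ≤ x v then
        (PMF.uniformOfFinset (cePairs x v) (cePairs_nonempty h)).map fun p =>
          let z := gls (ceSwap G x v p.1 p.2)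
          if Pref G z x then z else x
      else PMF.pure x
  else PMF.pure x


section Aux

variable {V : Type*} [Fintype V] [DecidableEq V]

lemma grundy_spec (G : SimpleGraph V) (c : V → ℕ) (hc : IsGrundy G c) (v : V) :
    1 ≤ c v ∧ ∀ u, G.Adj v u → c u ≠ c v := by
  have hne : {j | 1 ≤ j ∧ ∀ u, G.Adj v u → c u ≠ j}.Nonempty := by
    refine ⟨Finset.univ.sup c + 1, by omega, fun u _ => ?_⟩
    have := Finset.le_sup (f := c) (Finset.mem_univ u)
    omega
  have h2 : c v ∈ {j | 1 ≤ j ∧ ∀ u, G.Adj v u → c u ≠ j} := by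
    rw [hc v]
    exact Nat.sInf_mem hne
  exact h2

lemma grundy_lt (G : SimpleGraph V) (c : V → ℕ) (hc : IsGrundy G c) (v : V) (j : ℕ)
    (hj1 : 1 ≤ j) (hj : j < c v) : ∃ u, G.Adj v u ∧ c u = j := by
  have hlt : j < sInf {k | 1 ≤ k ∧ ∀ u, G.Adj v u → c u ≠ k} := by
    have := hc v
    unfold smallestFree at this
    omega
  have h := Nat.notMem_of_lt_sInf hlt
  simp only [Set.mem_setOf_eq, not_and, not_forall] at h
  obtain ⟨u, hu, hcu⟩ := h hj1
  exact ⟨u, hu, by omega⟩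

lemma neighbors_colored_le_two (G : SimpleGraph V) (c : V → ℕ) (hc : IsGrundy G c)
    (Δ i : ℕ) (hΔ : Δ = G.maxDegree) (hi1 : 1 ≤ i) (hi : i < Δ)
    (b : V) (hb : c b = Δ) :
    (Finset.univ.filter fun u => G.Adj b u ∧ c u = i).card ≤ 2 := by
  classical
  set N := Finset.univ.filter fun u => G.Adj b u ∧ c u = i with hN
  by_contra hcon
  push_neg at hcon
  set K := (Finset.Icc 1 (Δ - 1)).erase i with hK
  have hKcard : K.card = Δ - 2 := by
    rw [hK, Finset.card_erase_of_mem (by simp only [Finset.mem_Icc]; omega)]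
    rw [Nat.card_Icc]; omega
  have hex : ∀ k : ℕ, ∃ u, k ∈ K → G.Adj b u ∧ c u = k := by
    intro k
    by_cases hk : k ∈ K
    · have hk' : 1 ≤ k ∧ k ≤ Δ - 1 := by
        have := Finset.mem_of_mem_erase hk
        simpa [Finset.mem_Icc] using this
      obtain ⟨u, hu1, hu2⟩ := grundy_lt G c hc b k hk'.1 (by omega)
      exact ⟨u, fun _ => ⟨hu1, hu2⟩⟩
    · exact ⟨b, fun h => absurd h hk⟩
  choose g hg using hex
  have himg : (K.image g).card = K.card := by
    apply Finset.card_image_of_injOn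
    intro k hk l hl he
    have h1 := (hg k hk).2
    have h2 := (hg l hl).2
    rw [he] at h1; omega
  have hsub : N ∪ K.image g ⊆ G.neighborFinset b := by
    intro u hu
    rcases Finset.mem_union.mp hu with h | h
    · rw [hN] at h
      simp only [Finset.mem_filter] at h
      exact (G.mem_neighborFinset b u).mpr h.2.1
    · obtain ⟨k, hk, rfl⟩ := Finset.mem_image.mp h
      exact (G.mem_neighborFinset b (g k)).mpr (hg k hk).1
  have hdisj : Disjoint N (K.image g) := by
    rw [Finset.disjoint_left]
    intro u huN huI
    rw [hN] at huN
    simp only [Finset.mem_filter] at huN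
    obtain ⟨k, hk, rfl⟩ := Finset.mem_image.mp huI
    have h1 := (hg k hk).2
    have h2 : k ≠ i := Finset.ne_of_mem_erase hk
    omega
  have hcard : N.card + (Δ - 2) ≤ G.degree b := by
    rw [← hKcard, ← himg, ← Finset.card_union_of_disjoint hdisj]
    rw [← SimpleGraph.card_neighborFinset_eq_degree]
    exact Finset.card_le_card hsub
  have hdeg : G.degree b ≤ Δ := hΔ ▸ G.degree_le_maxDegree b
  omega

end Aux

/-- Let `G` be a finite simple graph with maximum degree `Δ`, let `c` be a
Grundy coloring of `G`, and let `i` be a color with `i < Δ`. Then in every connected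
component of the subgraph of `G` induced by the vertices colored `i` or `Δ`, the number of
`i`-colored vertices exceeds the number of `Δ`-colored vertices by at most `1`. -/
theorem stmt5 {V : Type*} [Fintype V] [DecidableEq V] (G : SimpleGraph V)
    (Δ : ℕ) (hΔ : Δ = G.maxDegree) (c : V → ℕ) (hc : IsGrundy G c)
    (i : ℕ) (hi1 : 1 ≤ i) (hi : i < Δ)
    (w : V) (hw : c w = i ∨ c w = Δ) :
    {u | (restrict G {x | c x = i ∨ c x = Δ}).Reachable w u ∧ c u = i}.ncard ≤
      {u | (restrict G {x | c x = i ∨ c x = Δ}).Reachable w u ∧ c u = Δ}.ncard + 1 := by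
  classical
  set H := restrict G {x | c x = i ∨ c x = Δ} with hH
  have hHadj : ∀ {x y : V}, H.Adj x y →
      G.Adj x y ∧ (c x = i ∨ c x = Δ) ∧ (c y = i ∨ c y = Δ) := fun h => h
  have hprop : ∀ u v, G.Adj u v → c u ≠ c v := by
    intro u v h hcuv
    exact (grundy_spec G c hc u).2 v h hcuv.symm
  -- In H, a neighbor of a Δ-colored vertex is i-colored, and vice versa.
  have hnbΔ : ∀ {x y : V}, H.Adj x y → c x = Δ → c y = i := by
    intro x y h hx
    obtain ⟨hG, _, hy⟩ := hHadj h
    have := hprop x y hG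
    omega
  have hnbi : ∀ {x y : V}, H.Adj x y → c x = i → c y = Δ := by
    intro x y h hx
    obtain ⟨hG, _, hy⟩ := hHadj h
    have := hprop x y hG
    omega
  -- step lemma: from any vertex ≠ r reachable from r, there is a neighbor closer to r
  have step : ∀ (r x : V), H.Reachable r x → x ≠ r →
      ∃ b, H.Adj x b ∧ H.dist r b + 1 = H.dist r x := by
    intro r x hrx hxr
    obtain ⟨p, hp⟩ := hrx.symm.exists_walk_length_eq_dist
    cases p with
    | nil => exact absurd rfl hxr
    | @cons _ b _ h q =>
      refine ⟨b, h, ?_⟩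
      have h1 : H.dist r b ≤ q.length := by
        rw [SimpleGraph.dist_comm]; exact SimpleGraph.dist_le q
      have h2 : H.dist r x = q.length + 1 := by
        rw [SimpleGraph.dist_comm]
        simpa [SimpleGraph.Walk.length_cons] using hp.symm
      have hrb : H.Reachable r b := hrx.trans h.reachable
      obtain ⟨p', hp'⟩ := hrb.exists_walk_length_eq_dist
      have h3 : H.dist r x ≤ H.dist r b + 1 := by
        have := SimpleGraph.dist_le (p'.concat h.symm)
        rwa [SimpleGraph.Walk.length_concat, hp'] at this
      omega
  set A := {u | H.Reachable w u ∧ c u = i} with hA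
  set B := {u | H.Reachable w u ∧ c u = Δ} with hB
  rcases Set.eq_empty_or_nonempty A with hAe | ⟨r, hr⟩
  · rw [hAe]; simp
  have hrA : H.Reachable w r ∧ c r = i := hr
  -- for each u in A \ {r}, a neighbor in B closer to r exists
  have hf' : ∀ u : V, ∃ b, u ∈ A \ {r} →
      b ∈ B ∧ H.Adj u b ∧ H.dist r b + 1 = H.dist r u := by
    intro u
    by_cases hu : u ∈ A \ {r}
    · obtain ⟨⟨hwu, hui⟩, hur⟩ := hu
      have hur' : u ≠ r := by simpa using hur
      have hru : H.Reachable r u := hrA.1.symm.trans hwu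
      obtain ⟨b, hadj, hd⟩ := step r u hru hur'
      have hcb : c b = Δ := hnbi hadj hui
      exact ⟨b, fun _ => ⟨⟨hwu.trans hadj.reachable, hcb⟩, hadj, hd⟩⟩
    · exact ⟨r, fun h => absurd h hu⟩
  choose f hf using hf'
  have hinj : Set.InjOn f (A \ {r}) := by
    intro u1 h1 u2 h2 he
    by_contra hne
    obtain ⟨hbB1, hadj1, hd1⟩ := hf u1 h1
    obtain ⟨hbB2, hadj2, hd2⟩ := hf u2 h2
    rw [← he] at hbB2 hadj2 hd2
    set b := f u1 with hb
    have hbΔ : c b = Δ := hbB1.2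
    have hbr : b ≠ r := by
      intro h; rw [h] at hbΔ; have := hrA.2; omega
    have hrb : H.Reachable r b := hrA.1.symm.trans hbB1.1
    obtain ⟨b', hadj', hd'⟩ := step r b hrb hbr
    have hne1 : b' ≠ u1 := by intro h; rw [h] at hd'; omega
    have hne2 : b' ≠ u2 := by intro h; rw [h] at hd'; omega
    have hu1A : c u1 = i := h1.1.2
    have hu2A : c u2 = i := h2.1.2
    have hb'i : c b' = i := hnbΔ hadj' hbΔ
    have hsub : ({u1, u2, b'} : Finset V) ⊆
        Finset.univ.filter fun u => G.Adj b u ∧ c u = i := by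
      intro x hx
      simp only [Finset.mem_insert, Finset.mem_singleton] at hx
      simp only [Finset.mem_filter, Finset.mem_univ, true_and]
      rcases hx with rfl | rfl | rfl
      · exact ⟨(hHadj hadj1.symm).1, hu1A⟩
      · exact ⟨(hHadj hadj2.symm).1, hu2A⟩
      · exact ⟨(hHadj hadj').1, hb'i⟩
    have hcard3 : ({u1, u2, b'} : Finset V).card = 3 := by
      rw [Finset.card_insert_of_notMem (by simp [hne, hne1.symm, hne2.symm]),
        Finset.card_insert_of_notMem (by simp [hne2.symm]), Finset.card_singleton]
    have hle := Finset.card_le_card hsub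
    have h2le := neighbors_colored_le_two G c hc Δ i hΔ hi1 hi b hbΔ
    omega
  have hmaps : ∀ u ∈ A \ {r}, f u ∈ B := fun u hu => (hf u hu).1
  have hle : (A \ {r}).ncard ≤ B.ncard :=
    Set.ncard_le_ncard_of_injOn f hmaps hinj (Set.toFinite B)
  have heq : (A \ {r}).ncard + 1 = A.ncard :=
    Set.ncard_diff_singleton_add_one hr (Set.toFinite A)
  omega
end DGC
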